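/- arXiv:2103.04317 — 2 statements merged into one kernel-verified Lean document; each statement's English description precedes it below -/
import Mathlib

section
/- For all positive semidefinite m×m complex matrices X, Y, Z with tr(X) = tr(Y) = tr(Z) = 1, the matrix 3·I − [tr(XY)·Z + tr(XZ)·Y + tr(YZ)·X] is positive semidefinite. -/
/-!
For `A ≥ 0` the functional `B ↦ tr(A B)` is monotone, because `tr(S⋆S B) = tr(S B S⋆)`.
A positive semidefinite `C` satisfies `C ≤ tr(C)·I`, its eigenvalues being nonnegative with sum
`tr C`. Together these give `0 ≤ tr(X Y) ≤ tr X · tr Y = 1`, hence `tr(X Y)·Z ≤ I`, and likewise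
for the other two terms.
-/

open scoped ComplexOrder MatrixOrder
open Matrix

namespace Matrix

variable {𝕜 n : Type*} [RCLike 𝕜] [Fintype n] {A B C : Matrix n n 𝕜}

theorem trace_mul_nonneg (hA : 0 ≤ A) (hB : 0 ≤ B) : 0 ≤ (A * B).trace := by
  classical
  obtain ⟨S, rfl⟩ := CStarAlgebra.nonneg_iff_eq_star_mul_self.mp hA
  rw [mul_assoc, trace_mul_comm]
  exact (star_right_conjugate_nonneg hB S).posSemidef.trace_nonneg

theorem trace_mul_le_trace_mul (hA : 0 ≤ A) (hBC : B ≤ C) : (A * B).trace ≤ (A * C).trace := by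
  have h := trace_mul_nonneg hA (sub_nonneg.mpr hBC)
  rwa [Matrix.mul_sub, trace_sub, sub_nonneg] at h

variable [DecidableEq n]

theorem le_trace_smul_one (hA : 0 ≤ A) : A ≤ A.trace • 1 := by
  have hA' := hA.posSemidef
  have hle : A ≤ algebraMap ℝ _ (∑ i, hA'.isHermitian.eigenvalues i) := by
    refine le_algebraMap_of_spectrum_le (fun x hx => ?_) hA'.isHermitian.isSelfAdjoint
    obtain ⟨i, rfl⟩ := hA'.isHermitian.spectrum_real_eq_range_eigenvalues ▸ hx
    exact Finset.single_le_sum (fun j _ => hA'.eigenvalues_nonneg j) (Finset.mem_univ i)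
  rwa [Algebra.algebraMap_eq_smul_one, RCLike.real_smul_eq_coe_smul (K := 𝕜), RCLike.ofReal_sum,
    ← hA'.isHermitian.trace_eq_sum_eigenvalues] at hle

theorem trace_mul_le_trace_mul_trace (hA : 0 ≤ A) (hB : 0 ≤ B) :
    (A * B).trace ≤ A.trace * B.trace :=
  calc (A * B).trace ≤ (A * (B.trace • 1)).trace :=
        trace_mul_le_trace_mul hA (le_trace_smul_one hB)
    _ = A.trace * B.trace := by
        rw [Matrix.mul_smul, Matrix.mul_one, trace_smul, smul_eq_mul, mul_comm]

theorem trace_mul_smul_le (hA : 0 ≤ A) (hB : 0 ≤ B) (hC : 0 ≤ C) :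
    (A * B).trace • C ≤ (A.trace * B.trace * C.trace) • 1 :=
  calc (A * B).trace • C ≤ (A * B).trace • (C.trace • 1) :=
        smul_le_smul_of_nonneg_left (le_trace_smul_one hC) (trace_mul_nonneg hA hB)
    _ = ((A * B).trace * C.trace) • 1 := smul_smul _ _ _
    _ ≤ (A.trace * B.trace * C.trace) • 1 :=
        smul_le_smul_of_nonneg_right (mul_le_mul_of_nonneg_right
          (trace_mul_le_trace_mul_trace hA hB) hC.posSemidef.trace_nonneg) zero_le_one

end Matrix

/-- For PSD matrices `X, Y, Z` of trace one:
`3·I − [tr(XY)·Z + tr(XZ)·Y + tr(YZ)·X] ≥ 0` in the Löwner order. -/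
theorem a4_degree_three_inequality (m : ℕ) (X Y Z : Matrix (Fin m) (Fin m) ℂ)
    (hX : X.PosSemidef) (hY : Y.PosSemidef) (hZ : Z.PosSemidef)
    (htX : X.trace = 1) (htY : Y.trace = 1) (htZ : Z.trace = 1) :
    ((3 : ℂ) • (1 : Matrix (Fin m) (Fin m) ℂ)
      - ((X * Y).trace • Z + (X * Z).trace • Y + (Y * Z).trace • X)).PosSemidef := by
  rw [← nonneg_iff_posSemidef, sub_nonneg]
  have hXYZ := trace_mul_smul_le hX.nonneg hY.nonneg hZ.nonneg
  have hXZY := trace_mul_smul_le hX.nonneg hZ.nonneg hY.nonneg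
  have hYZX := trace_mul_smul_le hY.nonneg hZ.nonneg hX.nonneg
  have hsum := add_le_add (add_le_add hXYZ hXZY) hYZX
  simp only [htX, htY, htZ, mul_one, ← add_smul] at hsum
  convert hsum using 2
  norm_num
end

section
/- If f, g : S_n → C satisfy that d_f(A) ≥ d_g(A) (both real) for all positive semidefinite n×n complex matrices A, and α, β ∈ R with α, β ≥ 0, then the matrix-valued function satisfies: for all PSD m×m matrices X_1,...,X_{n-1} and all w ∈ C^m, Σ_σ (f−g)(σ) tr(σ^{-1}(X_1⊗...⊗X_{n-1}⊗|w⟩⟨w|)) ≥ 0. -/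
/-!
A positive semidefinite matrix is a sum of rank-one matrices `|u⟩⟨u|`, and the trace is
multilinear in the tensor factors, so it suffices to treat rank-one factors, `|w⟩⟨w|` being one
of them. For those, `tr(σ⁻¹ (|u 0⟩⟨u 0| ⊗ ⋯ ⊗ |u (N-1)⟩⟨u (N-1)|)) = ∏ t, ⟪u t, u (σ t)⟫`, which is
the `σ`-term of `d_f` evaluated at the Gram matrix of `u`, a positive semidefinite matrix.
-/

open scoped ComplexOrder
open Matrix

/-- The Kronecker product `X 0 ⊗ ⋯ ⊗ X (n-1)` acting on `(ℂ^m)^{⊗ n}`,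
realized as a matrix indexed by functions. -/
noncomputable def tensorMat {n m : ℕ} (X : Fin n → Matrix (Fin m) (Fin m) ℂ) :
    Matrix (Fin n → Fin m) (Fin n → Fin m) ℂ :=
  Matrix.of fun k l => ∏ i, X i (k i) (l i)

/-- The operator on `(ℂ^m)^{⊗ n}` permuting the tensor factors by `σ`:
on pure tensors, the `i`-th factor of `σ • (w 0 ⊗ ⋯ ⊗ w (n-1))` is `w (σ⁻¹ i)`. -/
noncomputable def permMat {m : ℕ} (n : ℕ) (σ : Equiv.Perm (Fin n)) :
    Matrix (Fin n → Fin m) (Fin n → Fin m) ℂ :=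
  Matrix.of fun k l => if (k = fun i => l (σ⁻¹ i)) then 1 else 0

lemma tensorMat_sum {n m : ℕ} {κ : Fin n → Type*} [∀ i, Fintype (κ i)]
    (Y : ∀ i, κ i → Matrix (Fin m) (Fin m) ℂ) :
    tensorMat (fun i => ∑ c, Y i c) = ∑ c : ∀ i, κ i, tensorMat fun i => Y i (c i) := by
  ext k l
  simp only [tensorMat, of_apply, Matrix.sum_apply, Fintype.prod_sum]

lemma trace_permMat_inv_mul_tensorMat {n m : ℕ} (σ : Equiv.Perm (Fin n))
    (Y : Fin n → Matrix (Fin m) (Fin m) ℂ) :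
    (permMat n σ⁻¹ * tensorMat Y).trace = ∑ l : Fin n → Fin m, ∏ i, Y i (l i) (l (σ i)) := by
  simp only [trace, diag, mul_apply, permMat, tensorMat, of_apply, inv_inv, ite_mul, one_mul,
    zero_mul]
  rw [Finset.sum_comm]
  simp only [Finset.sum_ite_eq', Finset.mem_univ, if_true]

lemma trace_permMat_inv_mul_tensorMat_vecMulVec {n m : ℕ} (σ : Equiv.Perm (Fin n))
    (u : Fin n → Fin m → ℂ) :
    (permMat n σ⁻¹ * tensorMat fun i => vecMulVec (u i) (star (u i))).trace =
      ∏ t, gram ℂ (fun i => WithLp.toLp 2 (u i)) t (σ t) := by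
  rw [trace_permMat_inv_mul_tensorMat]
  simp only [vecMulVec_apply, gram_apply, EuclideanSpace.inner_toLp_toLp, dotProduct,
    Pi.star_apply, Finset.prod_mul_distrib]
  have reindex (l : Fin n → Fin m) :
      ∏ x, star (u x (l (σ x))) = ∏ x, star (u (σ⁻¹ x) (l x)) := by
    simpa using Equiv.prod_comp σ fun x => star (u (σ⁻¹ x) (l x))
  simp_rw [reindex, ← Finset.prod_mul_distrib]
  rw [← Fintype.prod_sum (fun x a => u x a * star (u (σ⁻¹ x) a))]
  simpa using (Equiv.prod_comp σ fun x => ∑ a, u x a * star (u (σ⁻¹ x) a)).symm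

theorem sum_sub_mul_trace_permMat_inv_mul_tensorMat_nonneg {N m : ℕ}
    (f g : Equiv.Perm (Fin N) → ℂ)
    (hfg : ∀ A : Matrix (Fin N) (Fin N) ℂ, A.PosSemidef →
      (∑ σ, g σ * ∏ t, A t (σ t)) ≤ ∑ σ, f σ * ∏ t, A t (σ t))
    {Y : Fin N → Matrix (Fin m) (Fin m) ℂ} (hY : ∀ i, (Y i).PosSemidef) :
    0 ≤ ∑ σ, (f σ - g σ) * (permMat N σ⁻¹ * tensorMat Y).trace := by
  choose k v hv using fun i => posSemidef_iff_eq_sum_vecMulVec.mp (hY i)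
  obtain rfl : Y = fun i => ∑ c, vecMulVec (v i c) (star (v i c)) := funext hv
  simp_rw [tensorMat_sum, Matrix.mul_sum, trace_sum, Finset.mul_sum]
  rw [Finset.sum_comm]
  refine Finset.sum_nonneg fun c _ => ?_
  simp_rw [trace_permMat_inv_mul_tensorMat_vecMulVec, sub_mul, Finset.sum_sub_distrib]
  exact sub_nonneg.mpr (hfg _ (posSemidef_gram ℂ _))

theorem matrix_gmf_dominance_general (n m : ℕ)
    (f g : Equiv.Perm (Fin (n + 1)) → ℂ)
    (hfg : ∀ A : Matrix (Fin (n + 1)) (Fin (n + 1)) ℂ, A.PosSemidef →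
      (∑ σ : Equiv.Perm (Fin (n + 1)), g σ * ∏ t, A t (σ t))
        ≤ ∑ σ : Equiv.Perm (Fin (n + 1)), f σ * ∏ t, A t (σ t))
    (X : Fin n → Matrix (Fin m) (Fin m) ℂ) (hX : ∀ i, (X i).PosSemidef)
    (w : Fin m → ℂ) :
    0 ≤ ∑ σ : Equiv.Perm (Fin (n + 1)), (f σ - g σ) *
        (permMat (n + 1) σ⁻¹ *
          tensorMat (Fin.snoc X (Matrix.vecMulVec w (star w)))).trace := by
  refine sum_sub_mul_trace_permMat_inv_mul_tensorMat_nonneg f g hfg fun i => ?_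
  induction i using Fin.lastCases with
  | last => simpa using posSemidef_vecMulVec_self_star w
  | cast i => simpa using hX i

/-- If `d_g(A) ≤ d_f(A)` (both real) for all positive semidefinite `A`, then
for all PSD `m × m` matrices `X 0, …, X (n-1)` and every `w ∈ ℂ^m`,
`∑_σ (f−g)(σ) tr(σ⁻¹ · (X 0 ⊗ ⋯ ⊗ X (n-1) ⊗ |w⟩⟨w|)) ≥ 0`. -/
theorem matrix_gmf_dominance (n m : ℕ)
    (f g : Equiv.Perm (Fin (n + 1)) → ℂ)
    (hfg : ∀ A : Matrix (Fin (n + 1)) (Fin (n + 1)) ℂ, A.PosSemidef →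
      (∑ σ : Equiv.Perm (Fin (n + 1)), g σ * ∏ t, A t (σ t))
        ≤ ∑ σ : Equiv.Perm (Fin (n + 1)), f σ * ∏ t, A t (σ t))
    (α β : ℝ) (hα : 0 ≤ α) (hβ : 0 ≤ β)
    (X : Fin n → Matrix (Fin m) (Fin m) ℂ) (hX : ∀ i, (X i).PosSemidef)
    (w : Fin m → ℂ) :
    0 ≤ ∑ σ : Equiv.Perm (Fin (n + 1)), (f σ - g σ) *
        (permMat (n + 1) σ⁻¹ *
          tensorMat (Fin.snoc X (Matrix.vecMulVec w (star w)))).trace :=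
  matrix_gmf_dominance_general n m f g hfg X hX w
end
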